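/- For s > 0 and integer L ≥ 3, the ODE dū/dt = ū^{L−1}(s − ū^L), ū(0) = β with 0 < β^L < s, satisfies the implicit relation t = (1/(s(2−L))) [ū^{2−L}(t) · ₂F₁(1, 2/L − 1, 2/L; ū^L(t)/s) − β^{2−L} · ₂F₁(1, 2/L − 1, 2/L; β^L/s)], where ₂F₁ is the Gauss hypergeometric function. -/

import Mathlib

/-- Gauss hypergeometric function ₂F₁(a,b,c;x) = Σ_k (a)_k (b)_k / (c)_k · x^k / k!. -/
noncomputable def twoF1 (a b c x : ℝ) : ℝ :=
  ∑' k : ℕ, ((ascPochhammer ℝ k).eval a * (ascPochhammer ℝ k).eval b /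
    (ascPochhammer ℝ k).eval c) * x ^ k / (Nat.factorial k)

/-!
Along a solution, `t ↦ G (ū t) - t` has derivative zero whenever `G' = 1 / (x^{L-1} (s - x^L))`.
Expanding `1 / (s - x^L)` as a geometric series and integrating termwise gives
`G x = Σ_k x^{Lk+2-L} / (s^{k+1} (Lk+2-L))`, and since `(c-1)_k / (c)_k = (c-1) / (c-1+k)` this
series is `x^{2-L} ₂F₁(1, c-1; c; x^L/s) / (s (2-L))` with `c = 2/L`. The formula for `G'` needs
`0 < ū < s^{1/L}`: the solution cannot leave this interval, since by the intermediate value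
theorem it would meet one of the equilibria `0`, `s^{1/L}`, and then by backward uniqueness for
the locally Lipschitz vector field it would have started there.
-/

open Real Set Topology

theorem ascPochhammer_eval_sub_one_mul {R : Type*} [CommRing R] (c : R) (k : ℕ) :
    (ascPochhammer R k).eval (c - 1) * (c - 1 + k) = (ascPochhammer R k).eval c * (c - 1) := by
  rw [← ascPochhammer_succ_eval, ascPochhammer_succ_left]
  simp [mul_comm]

theorem twoF1_one_sub_one_self {c : ℝ} (hc : 0 < c) (hc1 : c ≠ 1) (y : ℝ) :
    twoF1 1 (c - 1) c y = ∑' k : ℕ, (c - 1) / (c - 1 + k) * y ^ k := by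
  refine tsum_congr fun k => ?_
  have hpoch : 0 < (ascPochhammer ℝ k).eval c := ascPochhammer_pos k c hc
  have hck : c - 1 + k ≠ 0 := by
    rcases k with _ | k
    · simpa [sub_eq_zero] using hc1
    · push_cast
      linarith
  rw [ascPochhammer_eval_one]
  field_simp
  linear_combination y ^ k * ascPochhammer_eval_sub_one_mul c k

theorem one_le_abs_natCast_mul_add_two_sub {L : ℕ} (hL : L ≠ 2) (k : ℕ) :
    1 ≤ |(L : ℝ) * k + 2 - L| := by
  have hint : ((L * k + 2 - L : ℤ) : ℝ) = (L : ℝ) * k + 2 - L := by push_cast; ring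
  rw [← hint, ← Int.cast_abs, ← Int.cast_one, Int.cast_le]
  refine Int.one_le_abs ?_
  rcases k with _ | k
  · omega
  · have : (0 : ℤ) ≤ L * k := by positivity
    push_cast
    linarith

theorem natCast_mul_add_two_sub_ne_zero {L : ℕ} (hL : L ≠ 2) (k : ℕ) :
    (L : ℝ) * k + 2 - L ≠ 0 := by
  have := one_le_abs_natCast_mul_add_two_sub hL k
  contrapose! this
  simp [this]

theorem rpow_natCast_mul_add_sub {x : ℝ} (hx : 0 < x) (L k : ℕ) (a : ℝ) :
    x ^ ((L : ℝ) * k + a - L) = x ^ (a - L) * (x ^ L) ^ k := by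
  rw [← pow_mul, ← rpow_natCast, ← rpow_add hx]
  push_cast
  ring_nf

noncomputable def primitiveTerm (L : ℕ) (s : ℝ) (k : ℕ) (x : ℝ) : ℝ :=
  x ^ ((L : ℝ) * k + 2 - L) / (s ^ (k + 1) * ((L : ℝ) * k + 2 - L))

noncomputable def primitiveSeries (L : ℕ) (s x : ℝ) : ℝ :=
  ∑' k : ℕ, primitiveTerm L s k x

theorem mul_rpow_mul_twoF1_eq_primitiveSeries {L : ℕ} (hL0 : L ≠ 0) (hL : L ≠ 2) {s x : ℝ}
    (hs : s ≠ 0) (hx : 0 < x) :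
    1 / (s * (2 - L)) * (x ^ ((2 : ℝ) - L) * twoF1 1 (2 / L - 1) (2 / L) (x ^ L / s)) =
      primitiveSeries L s x := by
  have hL0' : (L : ℝ) ≠ 0 := by exact_mod_cast hL0
  have hc1 : (2 : ℝ) / L ≠ 1 := by
    rw [Ne, div_eq_one_iff_eq hL0']
    exact_mod_cast hL.symm
  rw [twoF1_one_sub_one_self (by positivity) hc1, ← tsum_mul_left, ← tsum_mul_left]
  refine tsum_congr fun k => ?_
  have h2L : (2 : ℝ) - L ≠ 0 := by simpa using natCast_mul_add_two_sub_ne_zero hL 0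
  have hα := natCast_mul_add_two_sub_ne_zero hL k
  have hcoef : (2 / L - 1) / (2 / L - 1 + k) = (2 - L) / ((L : ℝ) * k + 2 - L) := by
    rw [show 2 / (L : ℝ) - 1 + k = (L * k + 2 - L) / L by field_simp; ring,
      show 2 / (L : ℝ) - 1 = (2 - L) / L by field_simp, div_div_div_cancel_right₀ hL0']
  rw [hcoef, primitiveTerm, rpow_natCast_mul_add_sub hx, div_pow, pow_succ]
  field_simp

section primitiveSeries

variable {L : ℕ} {s : ℝ}

theorem hasDerivAt_primitiveTerm (hL : L ≠ 2) (hs : s ≠ 0) {y : ℝ} (hy : 0 < y) (k : ℕ) :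
    HasDerivAt (primitiveTerm L s k) (y ^ ((1 : ℝ) - L) * (y ^ L / s) ^ k / s) y := by
  have hα := natCast_mul_add_two_sub_ne_zero hL k
  refine ((hasDerivAt_rpow_const (p := (L : ℝ) * k + 2 - L) (Or.inl hy.ne')).div_const
    (s ^ (k + 1) * ((L : ℝ) * k + 2 - L))).congr_deriv ?_
  rw [show (L : ℝ) * k + 2 - L - 1 = L * k + 1 - L by ring, rpow_natCast_mul_add_sub hy, div_pow,
    pow_succ]
  field_simp

theorem summable_primitiveTerm (hL : L ≠ 2) (hs : 0 < s) {x : ℝ} (hx : 0 < x) (hxs : x ^ L < s) :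
    Summable fun k => primitiveTerm L s k x := by
  refine .of_norm_bounded (g := fun k => x ^ ((2 : ℝ) - L) * (x ^ L / s) ^ k / s)
    ((summable_geometric_of_lt_one (by positivity) ((div_lt_one hs).2 hxs)).mul_left _
      |>.div_const _) fun k => ?_
  calc ‖primitiveTerm L s k x‖
      = x ^ ((L : ℝ) * k + 2 - L) / (s ^ (k + 1) * |(L : ℝ) * k + 2 - L|) := by
        rw [primitiveTerm, norm_div, norm_mul, Real.norm_of_nonneg (by positivity),
          Real.norm_of_nonneg (by positivity), Real.norm_eq_abs]
    _ ≤ x ^ ((L : ℝ) * k + 2 - L) / (s ^ (k + 1) * 1) := by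
        gcongr
        exact one_le_abs_natCast_mul_add_two_sub hL k
    _ = x ^ ((2 : ℝ) - L) * (x ^ L / s) ^ k / s := by
        rw [rpow_natCast_mul_add_sub hx, div_pow, pow_succ]
        field_simp

theorem tsum_rpow_one_sub_mul_geometric (hL : 1 ≤ L) (hs : 0 < s) {x : ℝ} (hx : 0 < x)
    (hxs : x ^ L < s) :
    ∑' k : ℕ, x ^ ((1 : ℝ) - L) * (x ^ L / s) ^ k / s = (x ^ (L - 1) * (s - x ^ L))⁻¹ := by
  rw [tsum_div_const, tsum_mul_left,
    tsum_geometric_of_lt_one (by positivity) ((div_lt_one hs).2 hxs), show (1 : ℝ) - L = -((L - 1 : ℕ) : ℝ) by push_cast [hL]; ring, rpow_neg hx.le, rpow_natCast]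
  have : s - x ^ L ≠ 0 := (sub_pos.2 hxs).ne'
  field_simp

theorem exists_gt_pow_lt {x : ℝ} (hxs : x ^ L < s) : ∃ r, x < r ∧ r ^ L < s := by
  have hev : ∀ᶠ r in 𝓝[>] x, r ^ L < s :=
    ((continuous_pow L).continuousAt.eventually_lt continuousAt_const hxs).filter_mono
      nhdsWithin_le_nhds
  exact (hev.and self_mem_nhdsWithin).exists.imp fun _ h => ⟨h.2, h.1⟩

theorem hasDerivAt_primitiveSeries (hL1 : 1 ≤ L) (hL : L ≠ 2) (hs : 0 < s) {x : ℝ} (hx : 0 < x)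
    (hxs : x ^ L < s) :
    HasDerivAt (primitiveSeries L s) (x ^ (L - 1) * (s - x ^ L))⁻¹ x := by
  obtain ⟨r, hxr, hrs⟩ := exists_gt_pow_lt hxs
  have hr : 0 < r := hx.trans hxr
  have hxT : x ∈ Ioo (x / 2) r := ⟨by linarith, hxr⟩
  have hbound : ∀ (k : ℕ), ∀ y ∈ Ioo (x / 2) r,
      ‖y ^ ((1 : ℝ) - L) * (y ^ L / s) ^ k / s‖ ≤
        (x / 2) ^ ((1 : ℝ) - L) * (r ^ L / s) ^ k / s := by
    rintro k y ⟨hxy, hyr⟩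
    have hy : 0 < y := by linarith
    have hpow : y ^ ((1 : ℝ) - L) ≤ (x / 2) ^ ((1 : ℝ) - L) :=
      rpow_le_rpow_of_nonpos (by positivity) hxy.le (by simp [hL1])
    rw [Real.norm_of_nonneg (by positivity)]
    gcongr
  have hsum := hasDerivAt_tsum_of_isPreconnected (g := primitiveTerm L s)
    (g' := fun k y => y ^ ((1 : ℝ) - L) * (y ^ L / s) ^ k / s)
    ((summable_geometric_of_lt_one (by positivity) ((div_lt_one hs).2 hrs)).mul_left _
      |>.div_const _) isOpen_Ioo isPreconnected_Ioo
    (fun k y hy => hasDerivAt_primitiveTerm hL hs.ne' (by linarith [hy.1]) k)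
    hbound hxT (summable_primitiveTerm hL hs hx hxs) hxT
  rwa [tsum_rpow_one_sub_mul_geometric hL1 hs hx hxs] at hsum

end primitiveSeries

theorem ODE_solution_eq_left_of_eq_equilibrium {E : Type*} [NormedAddCommGroup E]
    [NormedSpace ℝ E] {f : E → E} (hf : LocallyLipschitz f) {c : E} (hc : f c = 0)
    {u : ℝ → E} {a b : ℝ} (hab : a ≤ b) (hu : ∀ t ∈ Icc a b, HasDerivAt u (f (u t)) t)
    (hub : u b = c) : u a = c := by
  have hcont : ContinuousOn u (Icc a b) := fun t ht => (hu t ht).continuousAt.continuousWithinAt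
  obtain ⟨K, hK⟩ := hf.locallyLipschitzOn.exists_lipschitzOnWith_of_compact
    ((isCompact_Icc.image_of_continuousOn hcont).insert c)
  refine ODE_solution_unique_of_mem_Icc_left (v := fun _ => f) (g := fun _ => c)
    (fun _ _ => hK) hcont (fun t ht => (hu t (Ioc_subset_Icc_self ht)).hasDerivWithinAt)
    (fun t ht => mem_insert_of_mem _ (mem_image_of_mem _ (Ioc_subset_Icc_self ht)))
    continuousOn_const (fun t _ => ?_) (fun _ _ => mem_insert _ _) hub ⟨le_rfl, hab⟩
  simpa [hc] using hasDerivWithinAt_const t (Iic t) c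

theorem ODE_solution_eq_of_crosses_equilibrium {f : ℝ → ℝ} (hf : LocallyLipschitz f) {c : ℝ}
    (hc : f c = 0) {u : ℝ → ℝ} {a b : ℝ} (hab : a ≤ b)
    (hu : ∀ t ∈ Icc a b, HasDerivAt u (f (u t)) t) (hcu : c ∈ uIcc (u a) (u b)) : u a = c := by
  have hcont : ContinuousOn u (uIcc a b) := fun t ht =>
    (hu t (by rwa [uIcc_of_le hab] at ht)).continuousAt.continuousWithinAt
  obtain ⟨τ, hτ, huτ⟩ := intermediate_value_uIcc hcont hcu
  rw [uIcc_of_le hab] at hτ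
  exact ODE_solution_eq_left_of_eq_equilibrium hf hc hτ.1
    (fun t ht => hu t ⟨ht.1, ht.2.trans hτ.2⟩) huτ

theorem ODE_solution_mem_Ioo_of_equilibria {f : ℝ → ℝ} (hf : LocallyLipschitz f) {p q : ℝ}
    (hp : f p = 0) (hq : f q = 0) {u : ℝ → ℝ} (hu : ∀ t, 0 ≤ t → HasDerivAt u (f (u t)) t)
    (hu0 : u 0 ∈ Ioo p q) {t : ℝ} (ht : 0 ≤ t) : u t ∈ Ioo p q := by
  have hu' : ∀ τ ∈ Icc 0 t, HasDerivAt u (f (u τ)) τ := fun τ hτ => hu τ hτ.1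
  by_contra hout
  rcases not_and_or.1 hout with hlow | hhigh
  · exact hu0.1.ne' <| ODE_solution_eq_of_crosses_equilibrium hf hp ht hu'
      (mem_uIcc.2 (Or.inr ⟨not_lt.1 hlow, hu0.1.le⟩))
  · exact hu0.2.ne <| ODE_solution_eq_of_crosses_equilibrium hf hq ht hu'
      (mem_uIcc.2 (Or.inl ⟨hu0.2.le, not_lt.1 hhigh⟩))

theorem ODE_solution_comp_primitive {f G u : ℝ → ℝ} (hu : ∀ t, 0 ≤ t → HasDerivAt u (f (u t)) t)
    (hf : ∀ t, 0 ≤ t → f (u t) ≠ 0) (hG : ∀ t, 0 ≤ t → HasDerivAt G (f (u t))⁻¹ (u t))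
    {t : ℝ} (ht : 0 ≤ t) : G (u t) = G (u 0) + t := by
  have hφ : ∀ τ, 0 ≤ τ → HasDerivAt (fun τ => G (u τ) - τ) 0 τ := fun τ hτ => by
    have := ((hG τ hτ).comp τ (hu τ hτ)).sub (hasDerivAt_id' τ)
    rwa [inv_mul_cancel₀ (hf τ hτ), sub_self] at this
  have := constant_of_has_deriv_right_zero (fun τ hτ => (hφ τ hτ.1).continuousAt.continuousWithinAt)
    (fun τ hτ => (hφ τ hτ.1).hasDerivWithinAt) t ⟨ht, le_rfl⟩
  simp only [sub_zero] at this
  linarith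

theorem pos_and_pow_lt_of_hasDerivAt {L : ℕ} (hL : 2 ≤ L) {s : ℝ} (hs : 0 < s) {u : ℝ → ℝ}
    (hu0 : 0 < u 0) (hu0s : u 0 ^ L < s)
    (hode : ∀ t : ℝ, 0 ≤ t → HasDerivAt u (u t ^ (L - 1) * (s - u t ^ L)) t) {t : ℝ}
    (ht : 0 ≤ t) : 0 < u t ∧ u t ^ L < s := by
  have hL0 : L ≠ 0 := by omega
  set q := s ^ ((L : ℝ)⁻¹)
  have hq : 0 ≤ q := by positivity
  have hqL : q ^ L = s := rpow_inv_natCast_pow hs.le hL0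
  have hf : LocallyLipschitz fun x : ℝ => x ^ (L - 1) * (s - x ^ L) :=
    ContDiff.locallyLipschitz (𝕂 := ℝ) (by fun_prop)
  have hmem := ODE_solution_mem_Ioo_of_equilibria hf (p := 0) (q := q)
    (by simp [zero_pow (show L - 1 ≠ 0 by omega)]) (by simp [hqL]) hode
    ⟨hu0, (pow_lt_pow_iff_left₀ hu0.le hq hL0).1 (hqL ▸ hu0s)⟩ ht
  exact ⟨hmem.1, hqL ▸ pow_lt_pow_left₀ hmem.2 hmem.1.le hL0⟩

/-- For s > 0, L ≥ 3, the ODE dū/dt = ū^{L−1}(s − ū^L), ū(0) = β, 0 < β^L < s, satisfies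
t = (1/(s(2−L))) [ū^{2−L}(t) ₂F₁(1, 2/L − 1, 2/L; ū^L(t)/s) − β^{2−L} ₂F₁(1, 2/L − 1, 2/L; β^L/s)]. -/
theorem stmt12 (L : ℕ) (hL : 3 ≤ L) (s b : ℝ) (hs : 0 < s) (hb : 0 < b) (hbs : b ^ L < s)
    (u : ℝ → ℝ) (hu0 : u 0 = b)
    (hode : ∀ t : ℝ, 0 ≤ t → HasDerivAt u (u t ^ (L - 1) * (s - u t ^ L)) t) :
    ∀ t : ℝ, 0 ≤ t →
      t = (1 / (s * (2 - (L : ℝ)))) *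
        (u t ^ ((2 : ℝ) - L) * twoF1 1 (2 / L - 1) (2 / L) (u t ^ L / s)
          - b ^ ((2 : ℝ) - L) * twoF1 1 (2 / L - 1) (2 / L) (b ^ L / s)) := by
  intro t ht
  subst hu0
  have hmem : ∀ τ, 0 ≤ τ → 0 < u τ ∧ u τ ^ L < s := fun τ hτ =>
    pos_and_pow_lt_of_hasDerivAt (by omega) hs hb hbs hode hτ
  have htime := ODE_solution_comp_primitive (f := fun x => x ^ (L - 1) * (s - x ^ L))
    (G := primitiveSeries L s) hode
    (fun τ hτ => mul_ne_zero (pow_pos (hmem τ hτ).1 _).ne' (sub_pos.2 (hmem τ hτ).2).ne')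
    (fun τ hτ => hasDerivAt_primitiveSeries (by omega) (by omega) hs (hmem τ hτ).1 (hmem τ hτ).2)
    ht
  rw [mul_sub, mul_rpow_mul_twoF1_eq_primitiveSeries (by omega) (by omega) hs.ne' (hmem t ht).1,
    mul_rpow_mul_twoF1_eq_primitiveSeries (by omega) (by omega) hs.ne' hb, htime]
  ring
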